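/- Fix constants $C_0 > 0$ and $\mu > 0$. Suppose $Y : [T_0, \infty) \to [1, \infty)$ satisfies $\frac{Y(t)}{\sqrt{1+t}} \le C_0 e^{-Y(t)^2} + C_0 (1+t)^{-3/4}$ for all $t \ge T_0$. Then there exists a constant $C > 0$ such that $Y(t) \le \big(C + \ln (1+t)^{1/2}\big)^{1/2}$ for all $t \ge T_0$. -/
import Mathlib


open Real

theorem interface_log_bound (C₀ μ T₀ : ℝ) (hC₀ : 0 < C₀) (hμ : 0 < μ) (hT₀ : 0 ≤ T₀)
    (Y : ℝ → ℝ) (hY1 : ∀ t, T₀ ≤ t → 1 ≤ Y t)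
    (hY : ∀ t, T₀ ≤ t →
      Y t / Real.sqrt (1 + t) ≤
        C₀ * Real.exp (-(Y t) ^ 2) + C₀ * (1 + t) ^ (-(3 : ℝ) / 4)) :
    ∃ C : ℝ, 0 < C ∧ ∀ t, T₀ ≤ t →
      Y t ≤ Real.sqrt (C + Real.log (1 + t) / 2) := by
  refine ⟨(2 * C₀ + 1) ^ 2, by positivity, ?_⟩
  intro t ht
  by_contra hcon
  push_neg at hcon
  have hY1t : 1 ≤ Y t := hY1 t ht
  have hYpos : 0 < Y t := lt_of_lt_of_le one_pos hY1t
  have hs : (1 : ℝ) ≤ 1 + t := by linarith [le_trans hT₀ ht]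
  have hspos : (0 : ℝ) < 1 + t := lt_of_lt_of_le one_pos hs
  have hlog : 0 ≤ Real.log (1 + t) := Real.log_nonneg hs
  -- from hcon get: (2C₀+1)^2 + log(1+t)/2 < Y t ^ 2
  have hsq : (2 * C₀ + 1) ^ 2 + Real.log (1 + t) / 2 < Y t ^ 2 :=
    (Real.sqrt_lt' hYpos).mp hcon
  have hsqrt_pos : 0 < Real.sqrt (1 + t) := Real.sqrt_pos.mpr hspos
  -- Y t ≤ (C₀ e^{-Y²} + C₀ (1+t)^{-3/4}) * √(1+t)
  have h1 : Y t ≤ (C₀ * Real.exp (-(Y t) ^ 2) + C₀ * (1 + t) ^ (-(3 : ℝ) / 4)) *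
      Real.sqrt (1 + t) := (div_le_iff₀ hsqrt_pos).mp (hY t ht)
  -- bound exp term
  have hexp : Real.exp (-(Y t) ^ 2) <
      Real.exp (-(2 * C₀ + 1) ^ 2) * (1 + t) ^ (-(1 : ℝ) / 2) := by
    have : Real.exp (-(Y t) ^ 2) <
        Real.exp (-((2 * C₀ + 1) ^ 2 + Real.log (1 + t) / 2)) :=
      Real.exp_lt_exp.mpr (by linarith)
    calc Real.exp (-(Y t) ^ 2)
        < Real.exp (-((2 * C₀ + 1) ^ 2 + Real.log (1 + t) / 2)) := this
      _ = Real.exp (-(2 * C₀ + 1) ^ 2) * (1 + t) ^ (-(1 : ℝ) / 2) := by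
          rw [Real.rpow_def_of_pos hspos, ← Real.exp_add]
          ring_nf
  have hsrt : Real.sqrt (1 + t) = (1 + t) ^ ((1 : ℝ) / 2) := Real.sqrt_eq_rpow (1 + t)
  -- (1+t)^{-1/2} * √(1+t) = 1
  have hmul1 : (1 + t) ^ (-(1 : ℝ) / 2) * Real.sqrt (1 + t) = 1 := by
    rw [hsrt, ← Real.rpow_add hspos]
    norm_num
  -- (1+t)^{-3/4} * √(1+t) = (1+t)^{-1/4} ≤ 1
  have hmul2 : (1 + t) ^ (-(3 : ℝ) / 4) * Real.sqrt (1 + t) ≤ 1 := by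
    rw [hsrt, ← Real.rpow_add hspos]
    apply Real.rpow_le_one_of_one_le_of_nonpos hs
    norm_num
  have hE : Real.exp (-(2 * C₀ + 1) ^ 2) ≤ 1 :=
    Real.exp_le_one_iff.mpr (by nlinarith)
  -- combine: Y t < 2 C₀
  have h2 : Y t < 2 * C₀ := by
    have hrp : (0:ℝ) ≤ (1 + t) ^ (-(3 : ℝ) / 4) := Real.rpow_nonneg hspos.le _
    have hb1 : C₀ * Real.exp (-(Y t) ^ 2) * Real.sqrt (1 + t) < C₀ := by
      have := mul_lt_mul_of_pos_left hexp hC₀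
      have h3 := mul_lt_mul_of_pos_right this hsqrt_pos
      calc C₀ * Real.exp (-(Y t) ^ 2) * Real.sqrt (1 + t)
          < C₀ * (Real.exp (-(2 * C₀ + 1) ^ 2) * (1 + t) ^ (-(1 : ℝ) / 2)) *
            Real.sqrt (1 + t) := h3
        _ = C₀ * Real.exp (-(2 * C₀ + 1) ^ 2) *
            ((1 + t) ^ (-(1 : ℝ) / 2) * Real.sqrt (1 + t)) := by ring
        _ = C₀ * Real.exp (-(2 * C₀ + 1) ^ 2) := by rw [hmul1, mul_one]
        _ ≤ C₀ * 1 := by nlinarith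
        _ = C₀ := mul_one _
    have hb2 : C₀ * (1 + t) ^ (-(3 : ℝ) / 4) * Real.sqrt (1 + t) ≤ C₀ := by
      calc C₀ * (1 + t) ^ (-(3 : ℝ) / 4) * Real.sqrt (1 + t)
          = C₀ * ((1 + t) ^ (-(3 : ℝ) / 4) * Real.sqrt (1 + t)) := by ring
        _ ≤ C₀ * 1 := by nlinarith
        _ = C₀ := mul_one _
    nlinarith [h1]
  -- but Y t > √((2C₀+1)^2) = 2C₀+1
  have h4 : 2 * C₀ + 1 < Y t := by nlinarith
  linarith
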